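/- Let φ : A → B be a homomorphism of generalized rings and 𝔟 an h-ideal of B. Then V_A(φ_{[1]}⁻¹(𝔟)) equals the closure of φ*(V_B(𝔟)) in spec(A), where φ* : spec(B) → spec(A) is the continuous map 𝔮 ↦ φ_{[1]}⁻¹(𝔮). -/

import Mathlib

open scoped Classical

noncomputable section

/-! ### Partially defined maps of finite sets -/

/-- Composition of partially defined maps of sets (`Set_•`). -/
def pcomp {X Y Z : Type} (g : Y → Option Z) (f : X → Option Y) : X → Option Z :=
  fun x => (f x).bind g

/-- The fiber of a partially defined map over a point of the target. -/
abbrev pfib {X Y : Type} (f : X → Option Y) (y : Y) : Type := {x : X // f x = some y}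

/-- The fiber of the identity partial map over `x` is a singleton. -/
def idFiberEquiv {X : Type} (x : X) : Fin 1 ≃ pfib (fun x' : X => some x') x where
  toFun _ := ⟨x, rfl⟩
  invFun _ := 0
  left_inv _ := Subsingleton.elim _ _
  right_inv p := Subtype.ext (Option.some.inj p.2).symm

/-- The fiber of the constant (total) map to the point `[1]` is everything. -/
def constFiberEquiv (X : Type) (z : Fin 1) :
    X ≃ pfib (fun _ : X => some (0 : Fin 1)) z where
  toFun x := ⟨x, congrArg some (Subsingleton.elim (0 : Fin 1) z)⟩
  invFun p := p.1
  left_inv _ := rfl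
  right_inv p := rfl

/-- The fiber of (the graph of) a bijection is a singleton. -/
def equivFiberEquiv {X Y : Type} (e : X ≃ Y) (y : Y) :
    Fin 1 ≃ pfib (fun x : X => some (e x)) y where
  toFun _ := ⟨e.symm y, congrArg some (e.apply_symm_apply y)⟩
  invFun _ := 0
  left_inv _ := Subsingleton.elim _ _
  right_inv p := Subtype.ext ((Equiv.symm_apply_eq e).mpr (Option.some.inj p.2).symm)

/-- The fiber of the map `[1] → X` with image `{x}` over `x' = x` is a singleton. -/
def pointFiberEquiv {X : Type} {x x' : X} (h : x = x') :
    Fin 1 ≃ pfib (fun _ : Fin 1 => some x) x' where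
  toFun z := ⟨z, congrArg some h⟩
  invFun p := p.1
  left_inv _ := rfl
  right_inv p := rfl

/-- Restriction of `f` to the fiber of `pcomp g f` over `z`, as a partial map into
the fiber of `g` over `z`. -/
def resMap {X Y Z : Type} (g : Y → Option Z) (f : X → Option Y) (z : Z) :
    pfib (pcomp g f) z → Option (pfib g z) :=
  fun x => (f x.1).bind fun y => if h : g y = some z then some ⟨y, h⟩ else none

/-- Identification of the fibers of the restriction `resMap g f z` with fibers of `f`. -/
def resFiberEquiv {X Y Z : Type} (g : Y → Option Z) (f : X → Option Y) (z : Z)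
    (p : pfib g z) : pfib f p.1 ≃ pfib (resMap g f z) p where
  toFun x := ⟨⟨x.1, by show (f x.1).bind g = some z; rw [x.2, Option.bind_some, p.2]⟩, by
    show (f x.1).bind _ = some p
    rw [x.2, Option.bind_some, dif_pos p.2]⟩
  invFun q := ⟨q.1.1, by
    have h := q.2
    unfold resMap at h
    rcases hf : f q.1.1 with _ | y
    · rw [hf, Option.bind_none] at h
      exact nomatch h
    · rw [hf, Option.bind_some] at h
      by_cases hg : g y = some z
      · rw [dif_pos hg] at h
        have hy : y = p.1 := congrArg Subtype.val (Option.some.inj h)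
        exact congrArg some hy
      · rw [dif_neg hg] at h
        exact nomatch h⟩
  left_inv x := Subtype.ext rfl
  right_inv q := Subtype.ext (Subtype.ext rfl)

/-! ### Fibered products -/

/-- The fibered product of two partial maps `g : Z ⇀ Y` and `f : X ⇀ Y`. -/
abbrev FP {X Y Z : Type} (g : Z → Option Y) (f : X → Option Y) : Type :=
  {p : Z × X // ∃ y : Y, g p.1 = some y ∧ f p.2 = some y}

/-- First projection of the fibered product, as a partial map. -/
def fpFst {X Y Z : Type} (g : Z → Option Y) (f : X → Option Y) : FP g f → Option Z :=
  fun p => some p.1.1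

/-- Second projection of the fibered product, as a partial map. -/
def fpSnd {X Y Z : Type} (g : Z → Option Y) (f : X → Option Y) : FP g f → Option X :=
  fun p => some p.1.2

/-- Identification of the fiber of the second projection of `Z ×_Y X` over `x`
with the fiber of `g` over `f x`. -/
def fpFiberSnd {X Y Z : Type} (g : Z → Option Y) (f : X → Option Y) {x : X} {y : Y}
    (hy : f x = some y) : pfib g y ≃ pfib (fpSnd g f) x where
  toFun w := ⟨⟨(w.1, x), ⟨y, w.2, hy⟩⟩, rfl⟩
  invFun q := ⟨q.1.1.1, by
    obtain ⟨y', hg, hf⟩ := q.1.2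
    have hx : q.1.1.2 = x := Option.some.inj q.2
    rw [hx] at hf
    have hyy : y' = y := Option.some.inj (hf.symm.trans hy)
    rw [hyy] at hg
    exact hg⟩
  left_inv w := Subtype.ext rfl
  right_inv q := by
    apply Subtype.ext
    apply Subtype.ext
    have hx : q.1.1.2 = x := Option.some.inj q.2
    exact Prod.ext rfl hx.symm

/-- Identification of the fiber of the first projection of `Z ×_Y X` over `z`
with the fiber of `f` over `g z`. -/
def fpFiberFst {X Y Z : Type} (g : Z → Option Y) (f : X → Option Y) {z : Z} {y : Y}
    (hy : g z = some y) : pfib f y ≃ pfib (fpFst g f) z where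
  toFun w := ⟨⟨(z, w.1), ⟨y, hy, w.2⟩⟩, rfl⟩
  invFun q := ⟨q.1.1.2, by
    obtain ⟨y', hg, hf⟩ := q.1.2
    have hz : q.1.1.1 = z := Option.some.inj q.2
    rw [hz] at hg
    have hyy : y' = y := Option.some.inj (hg.symm.trans hy)
    rw [hyy] at hf
    exact hf⟩
  left_inv w := Subtype.ext rfl
  right_inv q := by
    apply Subtype.ext
    apply Subtype.ext
    have hz : q.1.1.1 = z := Option.some.inj q.2
    exact Prod.ext hz.symm rfl
/-! ### Generalized rings

A generalized ring assigns to each finite set `X` a pointed set `A X`, functorially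
with respect to bijections (and hence, via the operations and units, with respect to
all partial bijections of finite sets), together with operations of multiplication
`∘ : A Y × A f → A X` and contraction `( , ) : A X × A f → A Y` for every partially
defined map `f : X ⇀ Y`, where `A f = ∏_{y ∈ Y} A (f⁻¹ y)`, and a unit `1 ∈ A [1]`,
subject to the axioms of associativity, left- and right-adjunction, left- and
right-linearity, and the unit axioms. -/

/-- The data underlying a generalized ring. -/
structure GenRingData where
  /-- the pointed set attached to a finite set `X` -/
  A : (X : Type) → [inst : Finite X] → Type
  /-- the base point `0_X ∈ A_X` -/
  zero : (X : Type) → [inst : Finite X] → A X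
  /-- the unit `1 ∈ A_{[1]}` -/
  one : A (Fin 1)
  /-- functoriality with respect to bijections of finite sets -/
  map : {X Y : Type} → [inst : Finite X] → [inst' : Finite Y] → (X ≃ Y) → A X → A Y
  /-- multiplication `∘ : A_Y × A_f → A_X` for a partially defined map `f : X ⇀ Y` -/
  mul : {X Y : Type} → [inst : Finite X] → [inst' : Finite Y] → (f : X → Option Y) →
      A Y → ((y : Y) → A (pfib f y)) → A X
  /-- contraction `( , ) : A_X × A_f → A_Y` for a partially defined map `f : X ⇀ Y` -/
  contr : {X Y : Type} → [inst : Finite X] → [inst' : Finite Y] → (f : X → Option Y) →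
      A X → ((y : Y) → A (pfib f y)) → A Y

namespace GenRingData

variable (R : GenRingData)

/-- The unit family `1_{id_X} ∈ A_{id_X}`. -/
def oneId (X : Type) [Finite X] : (x : X) → R.A (pfib (fun x' : X => some x') x) :=
  fun x => R.map (idFiberEquiv x) R.one

/-- The monoid operation `a ∘ b` on `A_{[1]}`. -/
def op (a b : R.A (Fin 1)) : R.A (Fin 1) :=
  R.mul (fun z : Fin 1 => some z) a (fun z => R.map (idFiberEquiv z) b)

/-- The `n`-fold power `a ∘ ⋯ ∘ a` in the monoid `A_{[1]}` (with `a⁰ = 1`). -/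
def opPow (a : R.A (Fin 1)) : ℕ → R.A (Fin 1)
  | 0 => R.one
  | n + 1 => R.op a (opPow a n)

/-- The left action `s ∘ a` of `A_{[1]}` on `A_X` (operation (1.2.5)). -/
def lact {X : Type} [Finite X] (s : R.A (Fin 1)) (a : R.A X) : R.A X :=
  R.mul (fun _ : X => some (0 : Fin 1)) s (fun z => R.map (constFiberEquiv X z) a)

/-- The pairing `(a, d) : A_X × A_X → A_{[1]}` (operation (1.2.6)). -/
def pair {X : Type} [Finite X] (a d : R.A X) : R.A (Fin 1) :=
  R.contr (fun _ : X => some (0 : Fin 1)) a (fun z => R.map (constFiberEquiv X z) d)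

/-- The right (diagonal) action `b ∘ c` of `(A_{[1]})^X` on `A_X` (operation (1.2.7)). -/
def ract {X : Type} [Finite X] (b : R.A X) (c : X → R.A (Fin 1)) : R.A X :=
  R.mul (fun x : X => some x) b (fun x => R.map (idFiberEquiv x) (c x))

/-- The involution `a ↦ aᵗ = (1, a)` of `A_{[1]}`. -/
def adj (a : R.A (Fin 1)) : R.A (Fin 1) := R.pair R.one a

/-- The element `(a, 1_{j_x}) ∈ A_X` obtained from `a ∈ A_{[1]}` via the
inclusion `j_x : {x} ↪ X`; for `a = 1` this is the image `1_x` of the unit. -/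
def pointElt (X : Type) [Finite X] (x : X) (a : R.A (Fin 1)) : R.A X :=
  R.contr (fun _ : Fin 1 => some x) a
    (fun x' => if h : x = x' then R.map (pointFiberEquiv h) R.one else R.zero _)

/-- The extended multiplication `A_g × A_f → A_{g∘f}`, defined fiberwise. -/
def emul {X Y Z : Type} [Finite X] [Finite Y] [Finite Z]
    (g : Y → Option Z) (f : X → Option Y)
    (c : (z : Z) → R.A (pfib g z)) (b : (y : Y) → R.A (pfib f y)) :
    (z : Z) → R.A (pfib (pcomp g f) z) :=
  fun z => R.mul (resMap g f z) (c z) (fun p => R.map (resFiberEquiv g f z p) (b p.1))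

/-- The extended contraction `A_{g∘f} × A_f → A_g`, defined fiberwise. -/
def econtr {X Y Z : Type} [Finite X] [Finite Y] [Finite Z]
    (g : Y → Option Z) (f : X → Option Y)
    (a : (z : Z) → R.A (pfib (pcomp g f) z)) (b : (y : Y) → R.A (pfib f y)) :
    (z : Z) → R.A (pfib g z) :=
  fun z => R.contr (resMap g f z) (a z) (fun p => R.map (resFiberEquiv g f z p) (b p.1))

/-- The pullback `ã ∈ A_{g̃}` of `a ∈ A_g` along the fibered product (used in
the right-linearity axiom). -/
def atilde {X Y Z : Type} [Finite X] [Finite Y] [Finite Z]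
    (g : Z → Option Y) (f : X → Option Y) (a : (y : Y) → R.A (pfib g y)) :
    (x : X) → R.A (pfib (fpSnd g f) x) :=
  fun x =>
    match hfx : f x with
    | some y => R.map (fpFiberSnd g f hfx) (a y)
    | none => R.zero _

/-- The pullback `c̃ ∈ A_{f̃}` of `c ∈ A_f` along the fibered product (used in
the right-linearity axiom). -/
def ctilde {X Y Z : Type} [Finite X] [Finite Y] [Finite Z]
    (g : Z → Option Y) (f : X → Option Y) (c : (y : Y) → R.A (pfib f y)) :
    (z : Z) → R.A (pfib (fpFst g f) z) :=
  fun z =>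
    match hgz : g z with
    | some y => R.map (fpFiberFst g f hgz) (c y)
    | none => R.zero _

end GenRingData

/-- A generalized ring: the data of `GenRingData` subject to the axioms
(pointedness, functoriality, zero laws, associativity, left/right adjunction,
left/right linearity, and the unit axioms, the latter in their reduced form over
the one-point base, which is equivalent to the general form). -/
structure GenRing where
  /-- the underlying data -/
  data : GenRingData
  /-- `A_∅ = {0}` -/
  isEmpty_eq_zero : ∀ (X : Type) [Finite X] [IsEmpty X] (a : data.A X), a = data.zero X
  /-- functoriality: identity -/
  map_refl : ∀ (X : Type) [Finite X] (a : data.A X), data.map (Equiv.refl X) a = a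
  /-- functoriality: composition -/
  map_trans : ∀ {X Y Z : Type} [Finite X] [Finite Y] [Finite Z] (e : X ≃ Y) (e' : Y ≃ Z)
      (a : data.A X), data.map (e.trans e') a = data.map e' (data.map e a)
  /-- functoriality: the maps are pointed -/
  map_zero : ∀ {X Y : Type} [Finite X] [Finite Y] (e : X ≃ Y),
      data.map e (data.zero X) = data.zero Y
  /-- `0 ∘ b = 0` -/
  mul_zero_left : ∀ {X Y : Type} [Finite X] [Finite Y] (f : X → Option Y)
      (b : (y : Y) → data.A (pfib f y)), data.mul f (data.zero Y) b = data.zero X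
  /-- `a ∘ 0_f = 0` -/
  mul_zero_right : ∀ {X Y : Type} [Finite X] [Finite Y] (f : X → Option Y) (a : data.A Y),
      data.mul f a (fun y => data.zero (pfib f y)) = data.zero X
  /-- `(0, b) = 0` -/
  contr_zero_left : ∀ {X Y : Type} [Finite X] [Finite Y] (f : X → Option Y)
      (b : (y : Y) → data.A (pfib f y)), data.contr f (data.zero X) b = data.zero Y
  /-- `(a, 0_f) = 0` -/
  contr_zero_right : ∀ {X Y : Type} [Finite X] [Finite Y] (f : X → Option Y) (a : data.A X),
      data.contr f a (fun y => data.zero (pfib f y)) = data.zero Y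
  /-- associativity: `d ∘ (c ∘ b) = (d ∘ c) ∘ b` -/
  assoc : ∀ {X Y Z : Type} [Finite X] [Finite Y] [Finite Z]
      (g : Y → Option Z) (f : X → Option Y) (d : data.A Z)
      (c : (z : Z) → data.A (pfib g z)) (b : (y : Y) → data.A (pfib f y)),
      data.mul (pcomp g f) d (data.emul g f c b) = data.mul f (data.mul g d c) b
  /-- left-adjunction: `(d, a ∘ c) = ((d, c), a)` -/
  left_adj : ∀ {X Y Z : Type} [Finite X] [Finite Y] [Finite Z]
      (g : Y → Option Z) (f : X → Option Y) (d : data.A X)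
      (a : (z : Z) → data.A (pfib g z)) (c : (y : Y) → data.A (pfib f y)),
      data.contr (pcomp g f) d (data.emul g f a c) = data.contr g (data.contr f d c) a
  /-- right-adjunction: `(d ∘ c, a) = (d, (a, c))` -/
  right_adj : ∀ {X Y Z : Type} [Finite X] [Finite Y] [Finite Z]
      (g : Y → Option Z) (f : X → Option Y) (d : data.A Y)
      (a : (z : Z) → data.A (pfib (pcomp g f) z)) (c : (y : Y) → data.A (pfib f y)),
      data.contr (pcomp g f) (data.mul f d c) a = data.contr g d (data.econtr g f a c)
  /-- left-linearity: `(d ∘ a, c) = d ∘ (a, c)` -/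
  left_lin : ∀ {X Y Z : Type} [Finite X] [Finite Y] [Finite Z]
      (g : Y → Option Z) (f : X → Option Y) (d : data.A Z)
      (a : (z : Z) → data.A (pfib (pcomp g f) z)) (c : (y : Y) → data.A (pfib f y)),
      data.contr f (data.mul (pcomp g f) d a) c = data.mul g d (data.econtr g f a c)
  /-- right-linearity: `(d, c) ∘ a = (d ∘ ã, c̃)`, with `ã`, `c̃` the pullbacks
  along the fibered product `Z ×_Y X` -/
  right_lin : ∀ {X Y Z : Type} [Finite X] [Finite Y] [Finite Z]
      (g : Z → Option Y) (f : X → Option Y) (d : data.A X)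
      (a : (y : Y) → data.A (pfib g y)) (c : (y : Y) → data.A (pfib f y)),
      data.mul g (data.contr f d c) a
        = data.contr (fpFst g f) (data.mul (fpSnd g f) d (data.atilde g f a))
            (data.ctilde g f c)
  /-- unit axiom: `a ∘ 1_{id_X} = a` -/
  mul_one_id : ∀ (X : Type) [Finite X] (a : data.A X),
      data.mul (fun x : X => some x) a (data.oneId X) = a
  /-- unit axiom: `1 ∘ a = a` -/
  one_lact : ∀ (X : Type) [Finite X] (a : data.A X), data.lact data.one a = a
  /-- unit axiom: `(a, 1_{id_X}) = a` -/
  contr_one_id : ∀ (X : Type) [Finite X] (a : data.A X),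
      data.contr (fun x : X => some x) a (data.oneId X) = a
  /-- unit axiom (1.8.11): `(a, 1_f) = f_A(a)` for a bijection `f = e` -/
  map_eq_contr : ∀ {X Y : Type} [Finite X] [Finite Y] (e : X ≃ Y) (a : data.A X),
      data.contr (fun x : X => some (e x)) a
        (fun y => data.map (equivFiberEquiv e y) data.one) = data.map e a
  /-- unit axiom (1.8.11): `a ∘ 1_{fᵗ} = f_A(a)` for a bijection `f = e` -/
  map_eq_mul : ∀ {X Y : Type} [Finite X] [Finite Y] (e : X ≃ Y) (a : data.A X),
      data.mul (fun y : Y => some (e.symm y)) a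
        (fun x => data.map (equivFiberEquiv e.symm x) data.one) = data.map e a
namespace GenRing

variable (R : GenRing)

/-- An `h`-ideal of a generalized ring: a subset `I ⊆ A_{[1]}` such that
`(b ∘ c, d) ∈ I` for all finite `X`, all `b, d ∈ A_X` and all `c ∈ I^X ⊆ (A_{[1]})^X`. -/
def IsHIdeal (I : Set (R.data.A (Fin 1))) : Prop :=
  ∀ (X : Type) [Finite X], ∀ (b d : R.data.A X) (c : X → R.data.A (Fin 1)),
    (∀ x, c x ∈ I) → R.data.pair (R.data.ract b c) d ∈ I

/-- A prime of a generalized ring: a proper `h`-ideal `P` whose complement is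
closed under the multiplication of `A_{[1]}`. -/
def IsPrimeH (P : Set (R.data.A (Fin 1))) : Prop :=
  R.IsHIdeal P ∧ R.data.one ∉ P ∧
    ∀ a b : R.data.A (Fin 1), R.data.op a b ∈ P → a ∈ P ∨ b ∈ P

end GenRing

/-- The spectrum of a generalized ring: the set of its primes. -/
structure SpecG (R : GenRing) where
  /-- the underlying prime `h`-ideal -/
  I : Set (R.data.A (Fin 1))
  /-- it is prime -/
  prime : R.IsPrimeH I

namespace GenRing

variable (R : GenRing)

/-- The basic open set `D_a = {𝔭 : a ∉ 𝔭}` of the Zariski topology. -/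
def basicOpen (a : R.data.A (Fin 1)) : Set (SpecG R) := {p | a ∉ p.I}

/-- The closed set `V(s) = {𝔭 : 𝔭 ⊇ s}` of the Zariski topology. -/
def zeroLocus (s : Set (R.data.A (Fin 1))) : Set (SpecG R) := {p | s ⊆ p.I}

/-- The Zariski topology on the spectrum, generated by the basic open sets. -/
instance : TopologicalSpace (SpecG R) :=
  TopologicalSpace.generateFrom {U | ∃ a : R.data.A (Fin 1), U = R.basicOpen a}

end GenRing

/-- A homomorphism of generalized rings: a (pointed, natural) family of maps
preserving multiplication, contraction and the unit. -/
structure GenRingHom (R S : GenRing) where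
  /-- the underlying family of maps -/
  app : (X : Type) → [inst : Finite X] → R.data.A X → S.data.A X
  /-- zero is preserved -/
  app_zero : ∀ (X : Type) [Finite X], app X (R.data.zero X) = S.data.zero X
  /-- the unit is preserved -/
  app_one : app (Fin 1) R.data.one = S.data.one
  /-- naturality with respect to bijections -/
  app_map : ∀ {X Y : Type} [Finite X] [Finite Y] (e : X ≃ Y) (a : R.data.A X),
      app Y (R.data.map e a) = S.data.map e (app X a)
  /-- multiplication is preserved -/
  app_mul : ∀ {X Y : Type} [Finite X] [Finite Y] (f : X → Option Y)
      (a : R.data.A Y) (b : (y : Y) → R.data.A (pfib f y)),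
      app X (R.data.mul f a b) = S.data.mul f (app Y a) (fun y => app (pfib f y) (b y))
  /-- contraction is preserved -/
  app_contr : ∀ {X Y : Type} [Finite X] [Finite Y] (f : X → Option Y)
      (a : R.data.A X) (b : (y : Y) → R.data.A (pfib f y)),
      app Y (R.data.contr f a b) = S.data.contr f (app X a) (fun y => app (pfib f y) (b y))

namespace GenRingHom

variable {R S : GenRing} (φ : GenRingHom R S)

theorem app_op (a b : R.data.A (Fin 1)) :
    φ.app (Fin 1) (R.data.op a b) = S.data.op (φ.app (Fin 1) a) (φ.app (Fin 1) b) := by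
  unfold GenRingData.op
  rw [φ.app_mul]
  congr 1
  funext z
  rw [φ.app_map]

theorem app_ract {X : Type} [Finite X] (b : R.data.A X) (c : X → R.data.A (Fin 1)) :
    φ.app X (R.data.ract b c) = S.data.ract (φ.app X b) (fun x => φ.app (Fin 1) (c x)) := by
  unfold GenRingData.ract
  rw [φ.app_mul]
  congr 1
  funext x
  rw [φ.app_map]

theorem app_pair {X : Type} [Finite X] (a d : R.data.A X) :
    φ.app (Fin 1) (R.data.pair a d) = S.data.pair (φ.app X a) (φ.app X d) := by
  unfold GenRingData.pair
  rw [φ.app_contr]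
  congr 1
  funext z
  rw [φ.app_map]

theorem app_lact {X : Type} [Finite X] (s : R.data.A (Fin 1)) (a : R.data.A X) :
    φ.app X (R.data.lact s a) = S.data.lact (φ.app (Fin 1) s) (φ.app X a) := by
  unfold GenRingData.lact
  rw [φ.app_mul]
  congr 1
  funext z
  rw [φ.app_map]

/-- The map `spec(φ) : spec(S) → spec(R)`, `𝔮 ↦ φ_{[1]}⁻¹(𝔮)`, induced by a
homomorphism of generalized rings `φ : R → S`. -/
def specMap (q : SpecG S) : SpecG R where
  I := φ.app (Fin 1) ⁻¹' q.I
  prime := by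
    refine ⟨?_, ?_, ?_⟩
    · intro X _ b d c hc
      show φ.app (Fin 1) (R.data.pair (R.data.ract b c) d) ∈ q.I
      rw [φ.app_pair, φ.app_ract]
      exact q.prime.1 X (φ.app X b) (φ.app X d) (fun x => φ.app (Fin 1) (c x)) hc
    · show φ.app (Fin 1) R.data.one ∉ q.I
      rw [φ.app_one]
      exact q.prime.2.1
    · intro a b hab
      have h : S.data.op (φ.app (Fin 1) a) (φ.app (Fin 1) b) ∈ q.I := by
        rw [← φ.app_op]; exact hab
      exact q.prime.2.2 _ _ h

end GenRingHom

/-- An equivalence ideal of a generalized ring: a family of equivalence relations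
on the sets `A_X` respecting the operations of multiplication and contraction. -/
structure EqvIdeal (R : GenRing) where
  /-- the family of relations -/
  rel : (X : Type) → [inst : Finite X] → R.data.A X → R.data.A X → Prop
  refl : ∀ (X : Type) [Finite X] (a : R.data.A X), rel X a a
  symm : ∀ (X : Type) [Finite X] {a b : R.data.A X}, rel X a b → rel X b a
  trans : ∀ (X : Type) [Finite X] {a b c : R.data.A X}, rel X a b → rel X b c → rel X a c
  /-- `a ∼ a'` implies `a ∘ b ∼ a' ∘ b` -/
  mul_left : ∀ {X Y : Type} [Finite X] [Finite Y] (f : X → Option Y) {a a' : R.data.A Y}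
      (b : (y : Y) → R.data.A (pfib f y)),
      rel Y a a' → rel X (R.data.mul f a b) (R.data.mul f a' b)
  /-- `b ∼ b'` (componentwise) implies `a ∘ b ∼ a ∘ b'` -/
  mul_right : ∀ {X Y : Type} [Finite X] [Finite Y] (f : X → Option Y) (a : R.data.A Y)
      {b b' : (y : Y) → R.data.A (pfib f y)},
      (∀ y, rel (pfib f y) (b y) (b' y)) → rel X (R.data.mul f a b) (R.data.mul f a b')
  /-- `a ∼ a'` implies `(a, b) ∼ (a', b)` -/
  contr_left : ∀ {X Y : Type} [Finite X] [Finite Y] (f : X → Option Y) {a a' : R.data.A X}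
      (b : (y : Y) → R.data.A (pfib f y)),
      rel X a a' → rel Y (R.data.contr f a b) (R.data.contr f a' b)
  /-- `b ∼ b'` (componentwise) implies `(a, b) ∼ (a, b')` -/
  contr_right : ∀ {X Y : Type} [Finite X] [Finite Y] (f : X → Option Y) (a : R.data.A X)
      {b b' : (y : Y) → R.data.A (pfib f y)},
      (∀ y, rel (pfib f y) (b y) (b' y)) → rel Y (R.data.contr f a b) (R.data.contr f a b')

namespace GenRing

variable (R : GenRing)

/-- The equivalence ideal `E(I)` generated by an (`h`-)ideal `I`: `a ∼ b` iff the
pair `(a, b)` belongs to every equivalence ideal containing `(i, 0)` for all `i ∈ I`. -/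
def erel (I : Set (R.data.A (Fin 1))) (X : Type) [Finite X] (a b : R.data.A X) : Prop :=
  ∀ ε : EqvIdeal R, (∀ i ∈ I, ε.rel (Fin 1) i (R.data.zero (Fin 1))) → ε.rel X a b

/-- A stable `h`-ideal: an `h`-ideal `I` such that for every pair `(a, b)` in the
equivalence ideal `E(I)` generated by `I` one has `a ∈ I ↔ b ∈ I`. -/
def IsStableHIdeal (I : Set (R.data.A (Fin 1))) : Prop :=
  R.IsHIdeal I ∧ ∀ a b : R.data.A (Fin 1), R.erel I (Fin 1) a b → (a ∈ I ↔ b ∈ I)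

/-- A multiplicative subset of `A_{[1]}`: contains `1`, closed under `∘`,
and stable under the involution. -/
def IsMulSet (S : Set (R.data.A (Fin 1))) : Prop :=
  R.data.one ∈ S ∧ (∀ a ∈ S, ∀ b ∈ S, R.data.op a b ∈ S) ∧
    (∀ a, a ∈ S ↔ R.data.adj a ∈ S)

/-- `φ : R → L` presents `L` as the localization `S⁻¹R` of `R` at the
multiplicative subset `S ⊆ A_{[1]}`: every element of `S` becomes invertible, every
element of `L` is a fraction `φ(a)/φ(s)`, and `φ(a) = φ(b)` iff `s ∘ a = s ∘ b`
for some `s ∈ S`. -/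
def IsLocalizationAt (S : Set (R.data.A (Fin 1))) {L : GenRing} (φ : GenRingHom R L) : Prop :=
  (∀ s ∈ S, ∃ t : L.data.A (Fin 1),
      L.data.op t (φ.app (Fin 1) s) = L.data.one ∧
      L.data.op (φ.app (Fin 1) s) t = L.data.one) ∧
  (∀ (X : Type) [Finite X], ∀ l : L.data.A X, ∃ (a : R.data.A X) (s : R.data.A (Fin 1)),
      s ∈ S ∧ L.data.lact (φ.app (Fin 1) s) l = φ.app X a) ∧
  (∀ (X : Type) [Finite X], ∀ a b : R.data.A X,
      φ.app X a = φ.app X b ↔ ∃ s ∈ S, R.data.lact s a = R.data.lact s b)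

end GenRing

/-!
If `𝔭 ⊇ φ⁻¹(𝔟)` and `a ∉ 𝔭`, no power of `φ(a)` lies in `𝔟` because `𝔭` is prime, so
an `h`-ideal of `S` maximal among those containing `𝔟` and avoiding these powers (Zorn)
gives a point `φ*(𝔮)` of the basic open set `D(a)`. As `D(a) ∩ D(b) = D(a ∘ b)`, the sets
`D(a)` form a basis, and `𝔭` lies in the closure of `φ*(V(𝔟))`.

Such a maximal `h`-ideal `J` is prime because the colon ideals `(J : y) = {t | t ∘ y ∈ J}`
are again `h`-ideals and `A_{[1]}` is commutative. Both facts come out of the axioms by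
transporting multiplications and contractions along bijections of fibers of partial maps.
-/

namespace GenRing

variable {R : GenRing}

section FiberTransport

def pfibEquivOfEq {X Y : Type} {f g : X → Option Y} (h : f = g) (y : Y) :
    pfib f y ≃ pfib g y :=
  Equiv.subtypeEquivRight fun x => by rw [h]

def pfibCompSymmEquiv {X X' Y : Type} (e : X ≃ X') (f : X → Option Y) (y : Y) :
    pfib f y ≃ pfib (fun x' => f (e.symm x')) y where
  toFun p := ⟨e p.1, by simpa using p.2⟩
  invFun q := ⟨e.symm q.1, q.2⟩
  left_inv p := Subtype.ext (e.symm_apply_apply p.1)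
  right_inv q := Subtype.ext (e.apply_symm_apply q.1)

def pfibCompEquiv {X X' Y : Type} (e : X ≃ X') (F : X' → Option Y) (y : Y) :
    pfib F y ≃ pfib (fun x => F (e x)) y :=
  pfibCompSymmEquiv e.symm F y

def pfibPcompGraphEquiv {X Y Y' : Type} (ε : Y ≃ Y') (f : X → Option Y) (y' : Y') :
    pfib f (ε.symm y') ≃ pfib (pcomp (fun y => some (ε y)) f) y' where
  toFun x := ⟨x.1, by simp [pcomp, x.2]⟩
  invFun x := ⟨x.1, by
    obtain ⟨y, hy, hεy⟩ := Option.bind_eq_some_iff.mp x.2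
    rw [hy, ← Option.some.inj hεy, Equiv.symm_apply_apply]⟩
  left_inv _ := rfl
  right_inv _ := rfl

instance pfib_graph_subsingleton {Y Y' : Type} (ε : Y ≃ Y') (y' : Y') :
    Subsingleton (pfib (fun y => some (ε y)) y') :=
  ⟨fun u v => Subtype.ext
    (ε.injective ((Option.some.inj u.2).trans (Option.some.inj v.2).symm))⟩

lemma pfib_some_subsingleton {X : Type} (x : X) :
    Subsingleton (pfib (fun x' : X => some x') x) :=
  ⟨fun u v => Subtype.ext ((Option.some.inj u.2).trans (Option.some.inj v.2).symm)⟩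

lemma map_congr_of_subsingleton {T T' : Type} [Finite T] [Finite T'] [Subsingleton T]
    (e₁ e₂ : T ≃ T') (v : R.data.A T) : R.data.map e₁ v = R.data.map e₂ v := by
  obtain rfl : e₁ = e₂ := Equiv.ext fun t =>
    (congrArg e₁ (Subsingleton.elim t _)).trans (e₁.apply_symm_apply (e₂ t))
  rfl

lemma mul_map_congr {X Y : Type} [Finite X] [Finite Y] {f g : X → Option Y} (h : f = g)
    (a : R.data.A Y) {T : Y → Type} [∀ y, Finite (T y)] (t : ∀ y, R.data.A (T y))
    (e₁ : ∀ y, T y ≃ pfib f y) (e₂ : ∀ y, T y ≃ pfib g y)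
    (he : ∀ y p, (e₁ y p).1 = (e₂ y p).1) :
    R.data.mul f a (fun y => R.data.map (e₁ y) (t y))
      = R.data.mul g a (fun y => R.data.map (e₂ y) (t y)) := by
  subst h
  obtain rfl : e₁ = e₂ := funext fun y => Equiv.ext fun p => Subtype.ext (he y p)
  rfl

lemma contr_map_congr {X Y : Type} [Finite X] [Finite Y] {f g : X → Option Y} (h : f = g)
    (a : R.data.A X) {T : Y → Type} [∀ y, Finite (T y)] (t : ∀ y, R.data.A (T y))
    (e₁ : ∀ y, T y ≃ pfib f y) (e₂ : ∀ y, T y ≃ pfib g y)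
    (he : ∀ y p, (e₁ y p).1 = (e₂ y p).1) :
    R.data.contr f a (fun y => R.data.map (e₁ y) (t y))
      = R.data.contr g a (fun y => R.data.map (e₂ y) (t y)) := by
  subst h
  obtain rfl : e₁ = e₂ := funext fun y => Equiv.ext fun p => Subtype.ext (he y p)
  rfl

lemma contr_congr {X Y : Type} [Finite X] [Finite Y] {f g : X → Option Y} (h : f = g)
    (a : R.data.A X) (fam₁ : ∀ y, R.data.A (pfib f y)) (fam₂ : ∀ y, R.data.A (pfib g y))
    (hfam : ∀ y, R.data.map (pfibEquivOfEq h y) (fam₁ y) = fam₂ y) :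
    R.data.contr f a fam₁ = R.data.contr g a fam₂ := by
  subst h
  obtain rfl : fam₂ = fam₁ := funext fun y => by
    rw [← hfam y, show pfibEquivOfEq (rfl : f = f) y = Equiv.refl _ from
      Equiv.ext fun _ => rfl, R.map_refl]
  rfl

end FiberTransport

section Naturality

lemma resMap_inner_graph {X X' Y : Type} (e : X ≃ X') (f : X → Option Y) (y : Y)
    (q : pfib (pcomp f (fun x' : X' => some (e.symm x'))) y) :
    resMap f (fun x' : X' => some (e.symm x')) y q
      = some ((pfibCompSymmEquiv e f y).symm q) := by
  simp only [resMap, Option.bind_some, dif_pos (show f (e.symm q.1) = some y from q.2)]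
  rfl

lemma emul_inner_graph_one {X X' Y : Type} [Finite X] [Finite X'] [Finite Y]
    (e : X ≃ X') (f : X → Option Y) (fam : ∀ y, R.data.A (pfib f y)) :
    R.data.emul f (fun x' : X' => some (e.symm x')) fam
        (fun x => R.data.map (equivFiberEquiv e.symm x) R.data.one)
      = fun y => R.data.map (pfibCompSymmEquiv e f y) (fam y) := by
  funext y
  simp only [GenRingData.emul, ← R.map_trans]
  rw [mul_map_congr (funext (resMap_inner_graph e f y)) (fam y) (T := fun _ => Fin 1)
      (fun _ => R.data.one) _ (fun p => equivFiberEquiv (pfibCompSymmEquiv e f y).symm p)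
      (fun _ _ => rfl)]
  exact R.map_eq_mul (pfibCompSymmEquiv e f y) (fam y)

lemma econtr_inner_graph_one {X X' Y : Type} [Finite X] [Finite X'] [Finite Y]
    (e : X ≃ X') (f : X → Option Y)
    (fam : ∀ y, R.data.A (pfib (fun x' : X' => f (e.symm x')) y)) :
    R.data.econtr f (fun x' : X' => some (e.symm x')) fam
        (fun x => R.data.map (equivFiberEquiv e.symm x) R.data.one)
      = fun y => R.data.map (pfibCompSymmEquiv e f y).symm (fam y) := by
  funext y
  simp only [GenRingData.econtr, ← R.map_trans]
  rw [contr_map_congr (funext (resMap_inner_graph e f y)) (fam y) (T := fun _ => Fin 1)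
      (fun _ => R.data.one) _ (fun p => equivFiberEquiv (pfibCompSymmEquiv e f y).symm p)
      (fun _ _ => rfl)]
  exact R.map_eq_contr (pfibCompSymmEquiv e f y).symm (fam y)

lemma map_mul {X X' Y : Type} [Finite X] [Finite X'] [Finite Y]
    (e : X ≃ X') (f : X → Option Y) (a : R.data.A Y) (fam : ∀ y, R.data.A (pfib f y)) :
    R.data.map e (R.data.mul f a fam)
      = R.data.mul (fun x' => f (e.symm x')) a
          (fun y => R.data.map (pfibCompSymmEquiv e f y) (fam y)) := by
  rw [← R.map_eq_mul e, ← R.assoc, emul_inner_graph_one]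
  rfl

lemma contr_map {X X' Y : Type} [Finite X] [Finite X'] [Finite Y]
    (e : X ≃ X') (F : X' → Option Y) (a : R.data.A X) (fam : ∀ y, R.data.A (pfib F y)) :
    R.data.contr F (R.data.map e a) fam
      = R.data.contr (fun x => F (e x)) a
          (fun y => R.data.map (pfibCompEquiv e F y) (fam y)) := by
  have hF : F = fun x' => (fun x => F (e x)) (e.symm x') := by simp
  refine (contr_congr hF (R.data.map e a) fam _ fun _ => rfl).trans ?_
  rw [← R.map_eq_mul e]
  refine (R.right_adj (fun x => F (e x)) (fun x' => some (e.symm x')) a _ _).trans ?_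
  rw [econtr_inner_graph_one]
  simp only [← R.map_trans]
  rfl

def fpGraphEquiv {P S : Type} (g : P → Option S) (E : Fin 1 ≃ S)
    (hg : ∀ p, g p = some (E 0)) :
    FP g (fun z : Fin 1 => some (E z)) ≃ P where
  toFun p := p.1.1
  invFun p := ⟨(p, 0), ⟨E 0, hg p, rfl⟩⟩
  left_inv _ := Subtype.ext (Prod.ext rfl (Subsingleton.elim _ _))
  right_inv _ := rfl

def pfibFpGraphEquiv {P S : Type} [Subsingleton S] (g : P → Option S) (E : Fin 1 ≃ S)
    (x : Fin 1) :
    pfib g (E x) ≃ pfib (fun _ : FP g (fun z : Fin 1 => some (E z)) => some (0 : Fin 1)) x where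
  toFun w :=
    ⟨⟨(w.1, x), ⟨E x, w.2, rfl⟩⟩, congrArg some (Subsingleton.elim (0 : Fin 1) x)⟩
  invFun q := ⟨q.1.1.1, by
    obtain ⟨y, hgy, -⟩ := q.1.2
    rw [hgy, Subsingleton.elim y (E x)]⟩
  left_inv _ := rfl
  right_inv q := Subtype.ext (Subtype.ext (Prod.ext rfl (Subsingleton.elim _ _)))

lemma mul_fpSnd_one_atilde {P S : Type} [Finite P] [Finite S] [Subsingleton S]
    (g : P → Option S) (E : Fin 1 ≃ S) (fam : ∀ s, R.data.A (pfib g s)) :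
    R.data.mul (fpSnd g (fun z : Fin 1 => some (E z))) R.data.one
        (R.data.atilde g (fun z : Fin 1 => some (E z)) fam)
      = R.data.map ((pfibFpGraphEquiv g E 0).trans (constFiberEquiv _ 0).symm)
          (fam (E 0)) := by
  have hsnd : fpSnd g (fun z : Fin 1 => some (E z)) = fun _ => some (0 : Fin 1) :=
    funext fun _ => congrArg some (Subsingleton.elim _ _)
  refine (mul_map_congr hsnd R.data.one (T := fun x => pfib g (E x)) (fun x => fam (E x))
    (fun x => fpFiberSnd g _ rfl) (pfibFpGraphEquiv g E) (fun _ _ => rfl)).trans ?_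
  have hfam : (fun x => R.data.map (pfibFpGraphEquiv g E x) (fam (E x)))
      = fun z => R.data.map (constFiberEquiv _ z) (R.data.map
          ((pfibFpGraphEquiv g E 0).trans (constFiberEquiv _ 0).symm) (fam (E 0))) := by
    funext x
    obtain rfl : x = 0 := Subsingleton.elim _ _
    rw [← R.map_trans]
    congr 1
  rw [hfam]
  exact R.one_lact _ _

/-- Target naturality of `mul` would need this very computation, so it goes through
right-linearity instead, with the fibered product `P ×_S [1] ≅ P`. -/
lemma mul_map_one_of_subsingleton {P S : Type} [Finite P] [Finite S] [Subsingleton S]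
    (g : P → Option S) (E : Fin 1 ≃ S) (hg : ∀ p, g p = some (E 0))
    (fam : ∀ s, R.data.A (pfib g s)) :
    R.data.mul g (R.data.map E R.data.one) fam
      = R.data.map (Equiv.subtypeUnivEquiv hg) (fam (E 0)) := by
  rw [← R.map_eq_contr E, R.right_lin, mul_fpSnd_one_atilde]
  have hct : R.data.ctilde g (fun z : Fin 1 => some (E z))
        (fun y => R.data.map (equivFiberEquiv E y) R.data.one)
      = fun p => R.data.map ((equivFiberEquiv E (E 0)).trans
          (fpFiberFst g _ (hg p))) R.data.one := by
    funext p
    simp only [GenRingData.ctilde]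
    split
    next y hy =>
      obtain rfl : y = E 0 := Option.some.inj (hy.symm.trans (hg p))
      rw [← R.map_trans]
    next hn => exact absurd (hg p) (by rw [hn]; exact nofun)
  rw [hct, contr_map_congr (rfl : fpFst g _ = fun p => some (fpGraphEquiv g E hg p)) _
    (T := fun _ => Fin 1) (fun _ => R.data.one)
    (fun p => (equivFiberEquiv E (E 0)).trans (fpFiberFst g _ (hg p)))
    (fun p => equivFiberEquiv (fpGraphEquiv g E hg) p)
    (fun _ _ => Subtype.ext (Prod.ext rfl (Subsingleton.elim _ _)))]
  refine (R.map_eq_contr (fpGraphEquiv g E hg) _).trans ?_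
  rw [← R.map_trans]
  rfl

lemma resMap_outer_graph {X Y Y' : Type} (ε : Y ≃ Y') (f : X → Option Y) (y' : Y')
    (q : pfib (pcomp (fun y => some (ε y)) f) y') :
    resMap (fun y => some (ε y)) f y' q = some (equivFiberEquiv ε y' 0) := by
  obtain ⟨y, hy, hεy⟩ := Option.bind_eq_some_iff.mp q.2
  simp only [resMap, hy, Option.bind_some, dif_pos hεy]
  exact congrArg some (Subsingleton.elim _ _)

lemma emul_outer_graph_one {X Y Y' : Type} [Finite X] [Finite Y] [Finite Y'] (ε : Y ≃ Y')
    (f : X → Option Y) (fam : ∀ y, R.data.A (pfib f y)) :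
    R.data.emul (fun y => some (ε y)) f
        (fun y' => R.data.map (equivFiberEquiv ε y') R.data.one) fam
      = fun y' => R.data.map (pfibPcompGraphEquiv ε f y') (fam (ε.symm y')) := by
  funext y'
  rw [GenRingData.emul, mul_map_one_of_subsingleton _ _ (resMap_outer_graph ε f y'),
    ← R.map_trans]
  rfl

lemma map_contr {X Y Y' : Type} [Finite X] [Finite Y] [Finite Y'] (ε : Y ≃ Y')
    (f : X → Option Y) (a : R.data.A X) (fam : ∀ y, R.data.A (pfib f y)) :
    R.data.map ε (R.data.contr f a fam)
      = R.data.contr (pcomp (fun y => some (ε y)) f) a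
          (fun y' => R.data.map (pfibPcompGraphEquiv ε f y') (fam (ε.symm y'))) := by
  rw [← R.map_eq_contr ε, ← R.left_adj, emul_outer_graph_one]

lemma mul_map {X Y Y' : Type} [Finite X] [Finite Y] [Finite Y'] (ε : Y ≃ Y')
    (f : X → Option Y) (a : R.data.A Y') (fam : ∀ y, R.data.A (pfib f y)) :
    R.data.mul f (R.data.map ε.symm a) fam
      = R.data.mul (pcomp (fun y => some (ε y)) f) a
          (fun y' => R.data.map (pfibPcompGraphEquiv ε f y') (fam (ε.symm y'))) := by
  rw [← R.map_eq_mul ε.symm, ← R.assoc]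
  exact congrArg _ (emul_outer_graph_one ε f fam)

end Naturality

section OnePointMonoid

lemma emul_id_id {X : Type} [Finite X] (c : X → R.data.A (Fin 1)) (y : R.data.A (Fin 1)) :
    R.data.emul (fun x' : X => some x') (fun x' : X => some x')
        (fun x => R.data.map (idFiberEquiv x) (c x)) (fun x => R.data.map (idFiberEquiv x) y)
      = fun x => R.data.map (idFiberEquiv x) (R.data.op (c x) y) := by
  funext x
  refine (mul_map (idFiberEquiv x).symm _ (c x) _).trans ?_
  rw [GenRingData.op, map_mul]
  simp only [← R.map_trans]
  refine mul_map_congr ?_ (c x) (T := fun _ => Fin 1) (fun _ => y) _ _ ?_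
  · funext q
    simp only [pcomp, resMap, Option.bind_some, dif_pos (show some q.1 = some x from q.2)]
    exact congrArg some (Subsingleton.elim _ _)
  · exact fun _ _ => (pfib_some_subsingleton x).elim _ _

lemma econtr_id_id (a c : R.data.A (Fin 1)) :
    R.data.econtr (fun z : Fin 1 => some z) (fun z : Fin 1 => some z)
        (fun z => R.data.map (idFiberEquiv z) a) (fun z => R.data.map (idFiberEquiv z) c)
      = fun z => R.data.map (idFiberEquiv z) (R.data.pair a c) := by
  funext z
  rw [GenRingData.econtr, GenRingData.pair, map_contr]
  -- `erw`: the fibers of `pcomp id id` and of `id` agree only after unfolding `pcomp`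
  erw [contr_map (idFiberEquiv z)]
  have h : (fun w => resMap (fun z' => some z') (fun z' => some z') z (idFiberEquiv z w))
      = pcomp (fun w => some (idFiberEquiv z w)) (fun _ : Fin 1 => some (0 : Fin 1)) := by
    funext w
    simp only [resMap, pcomp, Option.bind_some]
    rw [dif_pos (show some (idFiberEquiv z w).1 = some z from (idFiberEquiv z w).2)]
    exact congrArg some (Subsingleton.elim _ _)
  refine contr_congr h a _ _ fun y => ?_
  simp only [← R.map_trans]
  erw [← R.map_trans, ← R.map_trans]
  apply map_congr_of_subsingleton

def fpConstEquiv (X : Type) :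
    X ≃ FP (fun z : Fin 1 => some z) (fun _ : X => some (0 : Fin 1)) where
  toFun x := ⟨(0, x), 0, rfl, rfl⟩
  invFun p := p.1.2
  left_inv _ := rfl
  right_inv _ := Subtype.ext (Prod.ext (Subsingleton.elim _ _) rfl)

lemma op_pair {X : Type} [Finite X] (u d : R.data.A X) (y : R.data.A (Fin 1)) :
    R.data.op (R.data.pair u d) y = R.data.pair (R.data.ract u (fun _ => y)) d := by
  have hinner : R.data.mul (fpSnd (fun z : Fin 1 => some z) (fun _ : X => some (0 : Fin 1))) u
        (R.data.atilde _ _ (fun z => R.data.map (idFiberEquiv z) y))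
      = R.data.map (fpConstEquiv X) (R.data.ract u (fun _ => y)) := by
    rw [GenRingData.ract, map_mul]
    refine congrArg (R.data.mul _ u) (funext fun x => ?_)
    show R.data.map (fpFiberSnd (fun z : Fin 1 => some z)
      (fun _ : X => some (0 : Fin 1)) (x := x) rfl) (R.data.map (idFiberEquiv 0) y) = _
    simp only [← R.map_trans]
    apply map_congr_of_subsingleton
  rw [GenRingData.op, GenRingData.pair, R.right_lin, hinner, contr_map]
  refine congrArg (R.data.contr _ _) (funext fun z => ?_)
  show R.data.map _ (R.data.map (fpFiberFst (fun z : Fin 1 => some z)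
    (fun _ : X => some (0 : Fin 1)) (z := z) rfl) (R.data.map (constFiberEquiv X z) d)) = _
  simp only [← R.map_trans]
  congr 1

lemma op_one (a : R.data.A (Fin 1)) : R.data.op a R.data.one = a :=
  R.mul_one_id (Fin 1) a

lemma one_op (a : R.data.A (Fin 1)) : R.data.op R.data.one a = a :=
  (mul_map_congr (funext fun z => congrArg some (Subsingleton.elim 0 z)) R.data.one
    (T := fun _ => Fin 1) (fun _ => a) (constFiberEquiv (Fin 1)) idFiberEquiv
    (fun _ _ => Subsingleton.elim _ _)).symm.trans (R.one_lact (Fin 1) a)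

lemma contr_id_eq_pair (a c : R.data.A (Fin 1)) :
    R.data.contr (fun z : Fin 1 => some z) a (fun z => R.data.map (idFiberEquiv z) c)
      = R.data.pair a c :=
  contr_map_congr (funext fun z => congrArg some (Subsingleton.elim z 0)) a
    (T := fun _ => Fin 1) (fun _ => c) idFiberEquiv (constFiberEquiv (Fin 1))
    (fun _ _ => Subsingleton.elim _ _)

lemma pair_one (a : R.data.A (Fin 1)) : R.data.pair a R.data.one = a :=
  (contr_id_eq_pair a R.data.one).symm.trans (R.contr_one_id (Fin 1) a)

lemma ract_ract_const {X : Type} [Finite X] (b : R.data.A X) (c : X → R.data.A (Fin 1))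
    (y : R.data.A (Fin 1)) :
    R.data.ract (R.data.ract b c) (fun _ => y) = R.data.ract b (fun x => R.data.op (c x) y) := by
  rw [GenRingData.ract, GenRingData.ract, ← R.assoc, emul_id_id]
  rfl

lemma op_assoc (a b c : R.data.A (Fin 1)) :
    R.data.op (R.data.op a b) c = R.data.op a (R.data.op b c) :=
  ract_ract_const (X := Fin 1) a (fun _ => b) c

lemma pair_op (d c a : R.data.A (Fin 1)) :
    R.data.pair (R.data.op d c) a = R.data.pair d (R.data.pair a c) := by
  have h := R.right_adj (fun z : Fin 1 => some z) (fun z : Fin 1 => some z) d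
    (fun z => R.data.map (idFiberEquiv z) a) (fun z => R.data.map (idFiberEquiv z) c)
  rw [econtr_id_id] at h
  rw [← contr_id_eq_pair, ← contr_id_eq_pair]
  exact h

lemma op_eq_pair_adj (d c : R.data.A (Fin 1)) :
    R.data.op d c = R.data.pair d (R.data.adj c) := by
  have h := pair_op d c R.data.one
  rwa [pair_one] at h

lemma pair_eq_adj_pair (c a : R.data.A (Fin 1)) :
    R.data.pair c a = R.data.adj (R.data.pair a c) := by
  have h := pair_op R.data.one c a
  rwa [one_op] at h

lemma adj_adj (a : R.data.A (Fin 1)) : R.data.adj (R.data.adj a) = a := by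
  have h := pair_eq_adj_pair a R.data.one
  rw [pair_one] at h
  exact h.symm

lemma adj_op (c a : R.data.A (Fin 1)) : R.data.op (R.data.adj c) a = R.data.pair a c := by
  have h := op_pair (X := Fin 1) R.data.one c a
  rwa [show R.data.ract R.data.one (fun _ => a) = R.data.op R.data.one a from rfl, one_op] at h

lemma op_comm (x y : R.data.A (Fin 1)) : R.data.op x y = R.data.op y x := by
  have h : ∀ c a, R.data.op (R.data.adj c) a = R.data.op a (R.data.adj c) := fun c a => by
    rw [adj_op, op_eq_pair_adj, adj_adj]
  simpa only [adj_adj] using h (R.data.adj x) y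

lemma opPow_add (s : R.data.A (Fin 1)) (m n : ℕ) :
    R.data.op (R.data.opPow s m) (R.data.opPow s n) = R.data.opPow s (m + n) := by
  induction m with
  | zero => rw [GenRingData.opPow, one_op, Nat.zero_add]
  | succ k ih =>
    rw [GenRingData.opPow, op_assoc, ih, show k + 1 + n = k + n + 1 by omega, GenRingData.opPow]

end OnePointMonoid

section Primes

variable {I J P : Set (R.data.A (Fin 1))}

lemma IsHIdeal.op_mem_left (hI : R.IsHIdeal I) (y : R.data.A (Fin 1)) {j : R.data.A (Fin 1)}
    (hj : j ∈ I) : R.data.op y j ∈ I := by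
  have h := hI (Fin 1) y R.data.one (fun _ => j) (fun _ => hj)
  rwa [pair_one] at h

lemma IsHIdeal.op_mem_right (hI : R.IsHIdeal I) (y : R.data.A (Fin 1)) {j : R.data.A (Fin 1)}
    (hj : j ∈ I) : R.data.op j y ∈ I :=
  op_comm y j ▸ hI.op_mem_left y hj

def colon (J : Set (R.data.A (Fin 1))) (y : R.data.A (Fin 1)) : Set (R.data.A (Fin 1)) :=
  {t | R.data.op t y ∈ J}

lemma isHIdeal_colon (hJ : R.IsHIdeal J) (y : R.data.A (Fin 1)) : R.IsHIdeal (colon J y) := by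
  intro X _ b d c hc
  show R.data.op (R.data.pair (R.data.ract b c) d) y ∈ J
  rw [op_pair, ract_ract_const]
  exact hJ X b d _ hc

lemma subset_colon (hJ : R.IsHIdeal J) (y : R.data.A (Fin 1)) : J ⊆ colon J y :=
  fun _ => hJ.op_mem_right y

lemma IsPrimeH.mem_of_opPow_mem (hP : R.IsPrimeH P) {s : R.data.A (Fin 1)} {n : ℕ}
    (h : R.data.opPow s n ∈ P) : s ∈ P := by
  induction n with
  | zero => exact absurd h hP.2.1
  | succ k ih => exact (hP.2.2 _ _ h).elim id ih

lemma isHIdeal_sUnion {c : Set (Set (R.data.A (Fin 1)))} (hc : ∀ J ∈ c, R.IsHIdeal J)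
    (hch : IsChain (· ⊆ ·) c) (hne : c.Nonempty) : R.IsHIdeal (⋃₀ c) := by
  intro X _ b d f hf
  obtain ⟨J, hJc, hfJ⟩ := hch.directedOn.exists_mem_subset_of_finite_of_subset_sUnion hne
    (Set.finite_range f) (Set.range_subset_iff.2 hf)
  exact Set.mem_sUnion_of_mem ((hc J hJc) X b d f fun x => hfJ ⟨x, rfl⟩) hJc

lemma IsHIdeal.isPrimeH_of_maximal (hJ : R.IsHIdeal J) {s : R.data.A (Fin 1)}
    (hs : ∀ n, R.data.opPow s n ∉ J)
    (hmax : ∀ K, R.IsHIdeal K → J ⊆ K → (∀ n, R.data.opPow s n ∉ K) → K ⊆ J) :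
    R.IsPrimeH J := by
  have hcolon : ∀ x y, R.data.op x y ∈ J → x ∉ J →
      ∃ n, R.data.op (R.data.opPow s n) y ∈ J := by
    intro x y hxy hx
    by_contra! h
    exact hx (hmax _ (isHIdeal_colon hJ y) (subset_colon hJ y) h hxy)
  refine ⟨hJ, hs 0, fun x y hxy => ?_⟩
  by_contra! hxy'
  obtain ⟨m, hm⟩ := hcolon x y hxy hxy'.1
  obtain ⟨n, hn⟩ := hcolon y _ (op_comm (R.data.opPow s m) y ▸ hm) hxy'.2
  exact hs (n + m) (opPow_add s n m ▸ hn)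

lemma IsHIdeal.exists_isPrimeH (hI : R.IsHIdeal I) {s : R.data.A (Fin 1)}
    (hs : ∀ n, R.data.opPow s n ∉ I) : ∃ P, R.IsPrimeH P ∧ I ⊆ P ∧ s ∉ P := by
  let 𝒮 : Set (Set (R.data.A (Fin 1))) := {J | R.IsHIdeal J ∧ ∀ n, R.data.opPow s n ∉ J}
  obtain ⟨J, hIJ, hJmax⟩ := zorn_subset_nonempty 𝒮 (fun c hc𝒮 hch hne =>
    ⟨⋃₀ c, ⟨isHIdeal_sUnion (fun J hJ => (hc𝒮 hJ).1) hch hne, fun n hn => by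
      obtain ⟨J, hJc, hnJ⟩ := Set.mem_sUnion.mp hn
      exact (hc𝒮 hJc).2 n hnJ⟩, fun _ => Set.subset_sUnion_of_mem⟩) I ⟨hI, hs⟩
  refine ⟨J, hJmax.1.1.isPrimeH_of_maximal hJmax.1.2
    (fun K hK hJK hsK => hJmax.2 ⟨hK, hsK⟩ hJK), hIJ, fun hsJ => hJmax.1.2 1 ?_⟩
  rwa [GenRingData.opPow, GenRingData.opPow, op_one]

end Primes

section Zariski

lemma IsPrimeH.op_mem_iff {P : Set (R.data.A (Fin 1))} (hP : R.IsPrimeH P)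
    {a b : R.data.A (Fin 1)} : R.data.op a b ∈ P ↔ a ∈ P ∨ b ∈ P :=
  ⟨hP.2.2 a b, fun h => h.elim (hP.1.op_mem_right b) (hP.1.op_mem_left a)⟩

lemma basicOpen_op (a b : R.data.A (Fin 1)) :
    R.basicOpen (R.data.op a b) = R.basicOpen a ∩ R.basicOpen b := by
  ext p
  simp only [basicOpen, Set.mem_ofPred_eq, Set.mem_inter_iff, p.prime.op_mem_iff, not_or]

lemma isOpen_basicOpen (a : R.data.A (Fin 1)) : IsOpen (R.basicOpen a) :=
  TopologicalSpace.GenerateOpen.basic _ ⟨a, rfl⟩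

lemma isClosed_zeroLocus (s : Set (R.data.A (Fin 1))) : IsClosed (R.zeroLocus s) := by
  have h : (R.zeroLocus s)ᶜ = ⋃ a ∈ s, R.basicOpen a := by
    ext p
    simp [zeroLocus, basicOpen, Set.not_subset]
  rw [← isOpen_compl_iff, h]
  exact isOpen_biUnion fun a _ => isOpen_basicOpen a

lemma exists_basicOpen_subset {U : Set (SpecG R)} (hU : IsOpen U) {p : SpecG R} (hp : p ∈ U) :
    ∃ a, p ∈ R.basicOpen a ∧ R.basicOpen a ⊆ U := by
  induction hU with
  | basic V hV =>
    obtain ⟨a, rfl⟩ := hV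
    exact ⟨a, hp, subset_rfl⟩
  | univ => exact ⟨R.data.one, p.prime.2.1, Set.subset_univ _⟩
  | inter V W _ _ ihV ihW =>
    obtain ⟨a, hpa, haV⟩ := ihV hp.1
    obtain ⟨b, hpb, hbW⟩ := ihW hp.2
    exact ⟨R.data.op a b, basicOpen_op a b ▸ ⟨hpa, hpb⟩,
      basicOpen_op a b ▸ Set.inter_subset_inter haV hbW⟩
  | sUnion 𝒰 _ ih =>
    obtain ⟨V, hV𝒰, hpV⟩ := hp
    obtain ⟨a, hpa, haV⟩ := ih V hV𝒰 hpV
    exact ⟨a, hpa, haV.trans (Set.subset_sUnion_of_mem hV𝒰)⟩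

end Zariski

end GenRing

lemma GenRingHom.app_opPow {R S : GenRing} (φ : GenRingHom R S) (a : R.data.A (Fin 1))
    (n : ℕ) :
    φ.app (Fin 1) (R.data.opPow a n) = S.data.opPow (φ.app (Fin 1) a) n := by
  induction n with
  | zero => exact φ.app_one
  | succ k ih => rw [GenRingData.opPow, φ.app_op, ih, GenRingData.opPow]

/-- **`V_A(φ⁻¹(𝔟))` is the closure of `φ*(V_B(𝔟))`.**  For a homomorphism of generalized
rings `φ : R → S` and an `h`-ideal `𝔟` of `S`, the zero locus of `φ_{[1]}⁻¹(𝔟)` in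
`spec(R)` equals the closure of the image of `V_S(𝔟)` under the induced map
`φ* : spec(S) → spec(R)`. -/
theorem zeroLocus_preimage_eq_closure_image (R S : GenRing) (φ : GenRingHom R S)
    (b : Set (S.data.A (Fin 1))) (hb : S.IsHIdeal b) :
    R.zeroLocus (φ.app (Fin 1) ⁻¹' b) = closure (φ.specMap '' S.zeroLocus b) := by
  refine Set.Subset.antisymm (fun p hp => mem_closure_iff.2 fun U hU hpU => ?_)
    (closure_minimal ?_ (GenRing.isClosed_zeroLocus _))
  · obtain ⟨a, hpa, haU⟩ := GenRing.exists_basicOpen_subset hU hpU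
    have hpow : ∀ n, S.data.opPow (φ.app (Fin 1) a) n ∉ b := fun n hn =>
      hpa (p.prime.mem_of_opPow_mem (hp (show φ.app (Fin 1) (R.data.opPow a n) ∈ b by
        rwa [φ.app_opPow])))
    obtain ⟨P, hP, hbP, haP⟩ := hb.exists_isPrimeH hpow
    exact ⟨φ.specMap ⟨P, hP⟩, haU haP, ⟨P, hP⟩, hbP, rfl⟩
  · rintro _ ⟨q, hq, rfl⟩
    exact Set.preimage_mono hq

end
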